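/- Dynamic gradual guarantee, non-error direction: if Γ ⊢ H; t⋅T̄₀ and H; t⋅T̄₀ reduces in one step to H'; T̄₁⋅T̄₀ with T̄₁ not an error, then the erased configuration (H; t⋅T̄₀)^e reduces in one step to (H'; T̄₁⋅T̄₀)^e. -/
import Mathlib


namespace Dala

/-- The four Dala capabilities (`unsf` = unsafe, `lcl` = local). -/
inductive Cap
  | imm | iso | lcl | unsf
deriving DecidableEq

/-- Generating relations of the capability order: unsafe ≤ local ≤ iso ≤ imm. -/
inductive CapGen : Cap → Cap → Prop
  | ul : CapGen .unsf .lcl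
  | li : CapGen .lcl .iso
  | ii : CapGen .iso .imm

/-- The capability order. -/
def CapLe : Cap → Cap → Prop := Relation.ReflTransGen CapGen

/-- Names on the heap: program variables (inl) or locations (inr). -/
abbrev Name := ℕ ⊕ ℕ

instance : BEq Name := ⟨fun a b => decide (a = b)⟩

/-- Run-time values: locations, the absent marker ⊤, and the empty-channel marker ∅. -/
inductive Val
  | loc (ι : ℕ)
  | absent
  | empty
deriving DecidableEq

/-- Terms of the Dalarna calculus (A-normal form). Variable 0 is reserved for `self`. -/
inductive Term
  | var (x : ℕ)
  | consume (x : ℕ)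
  | val (v : Val)
  | letIn (x : ℕ) (e : Term) (t : Term)
  | fieldRead (x : ℕ) (f : ℕ)
  | fieldWrite (x : ℕ) (f : ℕ) (w : Term)
  | call (x : ℕ) (m : ℕ) (w : Term)
  | send (c : Term) (w : Term)
  | recv (c : Term)
  | spawn (x : ℕ) (t : Term)
  | blocked (k : ℕ) (ι : ℕ)
  | objLit (K : Cap) (fs : List (ℕ × Term)) (ms : List (ℕ × ℕ × Term))
  | cast (K : Cap) (w : Term)
  | copy (K : Cap) (x : ℕ)

/-- Heap cells: objects (capability, owner thread, fields, methods), channels, stack variables. -/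
inductive Cell
  | obj (K : Cap) (owner : ℕ) (fs : List (ℕ × Val)) (ms : List (ℕ × ℕ × Term))
  | chan (k : ℕ) (v : Val)
  | varc (v : Val)

/-- Heaps are association lists from names to cells (cons shadows). -/
abbrev Heap := List (Name × Cell)

/-- Environments (store typings): association lists from names to capabilities. -/
abbrev Env := List (Name × Cap)

-- Free variables of a term.
mutual
  def freeVars : Term → List ℕ
    | .var x => [x]
    | .consume x => [x]
    | .val _ => []
    | .letIn x e t => freeVars e ++ (freeVars t).filter (· ≠ x)
    | .fieldRead x _ => [x]
    | .fieldWrite x _ w => x :: freeVars w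
    | .call x _ w => x :: freeVars w
    | .send c w => freeVars c ++ freeVars w
    | .recv c => freeVars c
    | .spawn x t => (freeVars t).filter (· ≠ x)
    | .blocked _ _ => []
    | .objLit _ fs _ => freeVarsF fs
    | .cast _ w => freeVars w
    | .copy _ x => [x]
  def freeVarsF : List (ℕ × Term) → List ℕ
    | [] => []
    | p :: r => freeVars p.2 ++ freeVarsF r
end

-- All variables syntactically occurring in a term (including binders).
mutual
  def varsOf : Term → List ℕ
    | .var x => [x]
    | .consume x => [x]
    | .val _ => []
    | .letIn x e t => x :: (varsOf e ++ varsOf t)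
    | .fieldRead x _ => [x]
    | .fieldWrite x _ w => x :: varsOf w
    | .call x _ w => x :: varsOf w
    | .send c w => varsOf c ++ varsOf w
    | .recv c => varsOf c
    | .spawn x t => x :: varsOf t
    | .blocked _ _ => []
    | .objLit _ fs _ => varsOfF fs
    | .cast _ w => varsOf w
    | .copy _ x => [x]
  def varsOfF : List (ℕ × Term) → List ℕ
    | [] => []
    | p :: r => varsOf p.2 ++ varsOfF r
end

-- Locations syntactically occurring in a term.
mutual
  def locsOf : Term → List ℕ
    | .var _ => []
    | .consume _ => []
    | .val v => match v with | .loc ι => [ι] | _ => []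
    | .letIn _ e t => locsOf e ++ locsOf t
    | .fieldRead _ _ => []
    | .fieldWrite _ _ w => locsOf w
    | .call _ _ w => locsOf w
    | .send c w => locsOf c ++ locsOf w
    | .recv c => locsOf c
    | .spawn _ t => locsOf t
    | .blocked _ ι => [ι]
    | .objLit _ fs _ => locsOfF fs
    | .cast _ w => locsOf w
    | .copy _ _ => []
  def locsOfF : List (ℕ × Term) → List ℕ
    | [] => []
    | p :: r => locsOf p.2 ++ locsOfF r
end

-- Rename variable `a` to `b` throughout a term.
mutual
  def subst (a b : ℕ) : Term → Term
    | .var x => .var (if x = a then b else x)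
    | .consume x => .consume (if x = a then b else x)
    | .val v => .val v
    | .letIn x e t => .letIn x (subst a b e) (if x = a then t else subst a b t)
    | .fieldRead x f => .fieldRead (if x = a then b else x) f
    | .fieldWrite x f w => .fieldWrite (if x = a then b else x) f (subst a b w)
    | .call x m w => .call (if x = a then b else x) m (subst a b w)
    | .send c w => .send (subst a b c) (subst a b w)
    | .recv c => .recv (subst a b c)
    | .spawn x t => .spawn x (if x = a then t else subst a b t)
    | .blocked k ι => .blocked k ι
    | .objLit K fs ms => .objLit K (substF a b fs) ms
    | .cast K w => .cast K (subst a b w)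
    | .copy K x => .copy K (if x = a then b else x)
  def substF (a b : ℕ) : List (ℕ × Term) → List (ℕ × Term)
    | [] => []
    | p :: r => (p.1, subst a b p.2) :: substF a b r
end

/-! ### Heap lookups and capability helpers -/

def lookupH (H : Heap) (n : Name) : Option Cell := H.lookup n

def lookVar (H : Heap) (x : ℕ) : Option Val :=
  match lookupH H (Sum.inl x) with
  | some (.varc v) => some v
  | _ => none

/-- The capability of a value (channels count as local, per the store typing). -/
def capOf (H : Heap) (v : Val) : Option Cap :=
  match v with
  | .loc ι =>
    match lookupH H (Sum.inr ι) with
    | some (.obj K _ _ _) => some K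
    | some (.chan _ _) => some .lcl
    | _ => none
  | _ => none

def isIso (H : Heap) (v : Val) : Prop := capOf H v = some .iso
def isImm (H : Heap) (v : Val) : Prop := capOf H v = some .imm
def isLocal (H : Heap) (v : Val) : Prop := capOf H v = some .lcl

def ownerOf (H : Heap) (v : Val) : Option ℕ :=
  match v with
  | .loc ι =>
    match lookupH H (Sum.inr ι) with
    | some (.obj _ o _ _) => some o
    | _ => none
  | _ => none

def isOwner (H : Heap) (i : ℕ) (v : Val) : Prop := ownerOf H v = some i

def localOwner (H : Heap) (i : ℕ) (v : Val) : Prop := isLocal H v → isOwner H i v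

def notLocalOwner (H : Heap) (i : ℕ) (v : Val) : Prop := isLocal H v ∧ ¬ isOwner H i v

/-- `OkRef H K v`: the value `v` may be stored in a field of an object with capability `K`. -/
def OkRef (H : Heap) (K : Cap) (v : Val) : Prop :=
  ∀ ι, v = .loc ι → ∃ K', capOf H v = some K' ∧ CapLe K K'

/-- A deterministic fresh name (one more than the largest key in the heap). -/
def keyNat : Name → ℕ
  | .inl k => k
  | .inr k => k

def freshN (H : Heap) : ℕ := (H.map (fun p => keyNat p.1)).foldr max 0 + 1

def isObjAt (H : Heap) (ι : ℕ) : Prop :=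
  ∃ K o fs ms, lookupH H (Sum.inr ι) = some (.obj K o fs ms)

def isChanAt (H : Heap) (ι : ℕ) : Prop := ∃ k v, lookupH H (Sum.inr ι) = some (.chan k v)

/-! ### Evaluation contexts -/

inductive Ctx
  | hole
  | letc (x : ℕ) (C : Ctx) (t : Term)

def plug : Ctx → Term → Term
  | .hole, t => t
  | .letc x C u, t => .letIn x (plug C t) u

/-! ### Errors and single-thread reduction -/

inductive Err
  | normal   -- Err_N
  | absent   -- Err_A
  | perm     -- Err_P
  | cast     -- Err_C
deriving DecidableEq

abbrev ThreadL := List (ℕ × Term)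
abbrev Res := ThreadL ⊕ Err

/-- Single-thread small-step reduction: `StepT H i t H' r` reduces thread `i`
running `t` in heap `H`, producing heap `H'` and either new thread terms or an error. -/
inductive StepT : Heap → ℕ → Term → Heap → Res → Prop
  | rLet {H i x v t} :
      lookupH H (Sum.inl x) = none →
      StepT H i (.letIn x (.val v) t) ((Sum.inl x, .varc v) :: H) (.inl [(i, t)])
  | rVar {H i E x ι} :
      lookVar H x = some (.loc ι) → ¬ isIso H (.loc ι) →
      StepT H i (plug E (.var x)) H (.inl [(i, plug E (.val (.loc ι)))])
  | rConsume {H i E x ι} :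
      lookVar H x = some (.loc ι) →
      StepT H i (plug E (.consume x)) ((Sum.inl x, .varc .absent) :: H)
        (.inl [(i, plug E (.val (.loc ι)))])
  | rField {H i E x f ι K o fs ms v} :
      lookVar H x = some (.loc ι) →
      lookupH H (Sum.inr ι) = some (.obj K o fs ms) →
      fs.lookup f = some v → ¬ isIso H v → localOwner H i (.loc ι) →
      StepT H i (plug E (.fieldRead x f)) H (.inl [(i, plug E (.val v))])
  | rFieldAssign {H i E x f v ι K o fs ms v'} :
      lookVar H x = some (.loc ι) →
      lookupH H (Sum.inr ι) = some (.obj K o fs ms) →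
      fs.lookup f = some v' → ¬ isImm H (.loc ι) → OkRef H K v →
      (isLocal H (.loc ι) → isOwner H i (.loc ι) ∧ localOwner H i v) →
      StepT H i (plug E (.fieldWrite x f (.val v)))
        ((Sum.inr ι, .obj K o ((f, v) :: fs) ms) :: H) (.inl [(i, plug E (.val v'))])
  | rNew {H i E K} {fs : List (ℕ × Val)} {ms ι} :
      (∀ p ∈ fs, OkRef H K p.2 ∧ ((K = .lcl ∧ isLocal H p.2) → isOwner H i p.2)) →
      ι = freshN H →
      StepT H i (plug E (.objLit K (fs.map fun p => (p.1, Term.val p.2)) ms))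
        ((Sum.inr ι, .obj K i fs ms) :: H) (.inl [(i, plug E (.val (.loc ι)))])
  | rCall {H i E x m v ι K o fs ms y body x' y'} :
      lookVar H x = some (.loc ι) →
      lookupH H (Sum.inr ι) = some (.obj K o fs ms) →
      ms.lookup m = some (y, body) →
      x' = freshN H → y' = freshN H + 1 →
      StepT H i (plug E (.call x m (.val v)))
        ((Sum.inl x', .varc (.loc ι)) :: (Sum.inl y', .varc v) :: H)
        (.inl [(i, plug E (subst y y' (subst 0 x' body)))])
  | rCastLoc {H i E K ι o fs ms} :
      lookupH H (Sum.inr ι) = some (.obj K o fs ms) →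
      StepT H i (plug E (.cast K (.val (.loc ι)))) H (.inl [(i, plug E (.val (.loc ι)))])
  | rSpawn {H i E x t ι} :
      lookupH H (Sum.inl x) = none → ι = freshN H →
      StepT H i (plug E (.spawn x t))
        ((Sum.inl x, .varc (.loc ι)) :: (Sum.inr ι, .chan ι .empty) :: H)
        (.inl [(i, plug E (.val (.loc ι))), (ι + 1, t)])
  | rRecv {H i E ι k ι'} :
      lookupH H (Sum.inr ι) = some (.chan k (.loc ι')) →
      StepT H i (plug E (.recv (.val (.loc ι)))) ((Sum.inr ι, .chan k .empty) :: H)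
        (.inl [(i, plug E (.val (.loc ι')))])
  | rSendBlock {H i E ι v k k'} :
      lookupH H (Sum.inr ι) = some (.chan k .empty) → k' = freshN H →
      StepT H i (plug E (.send (.val (.loc ι)) (.val v)))
        ((Sum.inr ι, .chan k' v) :: H) (.inl [(i, plug E (.blocked k' ι))])
  | rSendUnblock {H i E k ι k' v} :
      lookupH H (Sum.inr ι) = some (.chan k' v) → (v = .empty ∨ k ≠ k') →
      StepT H i (plug E (.blocked k ι)) H (.inl [(i, plug E (.val (.loc ι)))])
  | rCopy {H i E K x ι' K0 o fs ms ι} :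
      K ≠ .iso → lookVar H x = some (.loc ι') → localOwner H i (.loc ι') →
      lookupH H (Sum.inr ι') = some (.obj K0 o fs ms) → ι = freshN H →
      StepT H i (plug E (.copy K x)) ((Sum.inr ι, .obj K i fs ms) :: H)
        (.inl [(i, plug E (.val (.loc ι)))])
  -- error rules
  | eNoSuchField {H i E x f ι K o fs ms} :
      lookVar H x = some (.loc ι) →
      lookupH H (Sum.inr ι) = some (.obj K o fs ms) → fs.lookup f = none →
      StepT H i (plug E (.fieldRead x f)) H (.inr .normal)
  | eNoSuchMethod {H i E x m v ι K o fs ms} :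
      lookVar H x = some (.loc ι) →
      lookupH H (Sum.inr ι) = some (.obj K o fs ms) → ms.lookup m = none →
      StepT H i (plug E (.call x m (.val v))) H (.inr .normal)
  | eNoSuchFieldAssign {H i E x f v ι K o fs ms} :
      lookVar H x = some (.loc ι) →
      lookupH H (Sum.inr ι) = some (.obj K o fs ms) → fs.lookup f = none →
      StepT H i (plug E (.fieldWrite x f (.val v))) H (.inr .normal)
  | eSendBadTargetOrArgument {H i E ι ι'} :
      (isObjAt H ι ∨ isChanAt H ι') →
      StepT H i (plug E (.send (.val (.loc ι)) (.val (.loc ι')))) H (.inr .normal)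
  | eRecvBadTarget {H i E ι} :
      isObjAt H ι →
      StepT H i (plug E (.recv (.val (.loc ι)))) H (.inr .normal)
  | eCastError {H i E K K' ι o fs ms} :
      lookupH H (Sum.inr ι) = some (.obj K' o fs ms) → K' ≠ K →
      StepT H i (plug E (.cast K (.val (.loc ι)))) H (.inr .cast)
  | eAbsentVar {H i E x} :
      lookVar H x = some .absent →
      StepT H i (plug E (.var x)) H (.inr .absent)
  | eConsume {H i E x} :
      lookVar H x = some .absent →
      StepT H i (plug E (.consume x)) H (.inr .absent)
  | eAbsentTarget {H i E x m v} :
      lookVar H x = some .absent →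
      StepT H i (plug E (.call x m (.val v))) H (.inr .absent)
  | eAbsentTargetAccess {H i E x f} :
      lookVar H x = some .absent →
      StepT H i (plug E (.fieldRead x f)) H (.inr .absent)
  | eAbsentFieldAssign {H i E x f v} :
      lookVar H x = some .absent →
      StepT H i (plug E (.fieldWrite x f (.val v))) H (.inr .absent)
  | eAbsentCopyTarget {H i E K x} :
      lookVar H x = some .absent →
      StepT H i (plug E (.copy K x)) H (.inr .absent)
  | eAliasIso {H i E x ι} :
      lookVar H x = some (.loc ι) → isIso H (.loc ι) →
      StepT H i (plug E (.var x)) H (.inr .perm)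
  | eIsoField {H i E x f ι K o fs ms v} :
      lookVar H x = some (.loc ι) →
      lookupH H (Sum.inr ι) = some (.obj K o fs ms) →
      fs.lookup f = some v → localOwner H i (.loc ι) → isIso H v →
      StepT H i (plug E (.fieldRead x f)) H (.inr .perm)
  | eLocalField {H i E x f ι} :
      lookVar H x = some (.loc ι) → notLocalOwner H i (.loc ι) →
      StepT H i (plug E (.fieldRead x f)) H (.inr .perm)
  | eBadInstantiation {H i E K} {fs : List (ℕ × Val)} {ms} :
      (∃ p ∈ fs, ¬ OkRef H K p.2 ∨ notLocalOwner H i p.2) →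
      StepT H i (plug E (.objLit K (fs.map fun p => (p.1, Term.val p.2)) ms)) H (.inr .perm)
  | eBadFieldAssign {H i E x f v ι K o fs ms v'} :
      lookVar H x = some (.loc ι) →
      lookupH H (Sum.inr ι) = some (.obj K o fs ms) → fs.lookup f = some v' →
      (isImm H (.loc ι) ∨ ¬ OkRef H K v ∨ notLocalOwner H i (.loc ι) ∨
        (isLocal H (.loc ι) ∧ isOwner H i (.loc ι) ∧ notLocalOwner H i v)) →
      StepT H i (plug E (.fieldWrite x f (.val v))) H (.inr .perm)
  | eCopyTarget {H i E K x ι} :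
      lookVar H x = some (.loc ι) → notLocalOwner H i (.loc ι) →
      StepT H i (plug E (.copy K x)) H (.inr .perm)

/-! ### Configurations and global reduction -/

inductive Conf
  | ok (ts : ThreadL)
  | err (e : Err)

/-- Global reduction: any thread may step (C-Eval together with the commutativity
equivalences); a finished thread (a value) may be removed. -/
inductive Step : Heap → Conf → Heap → Conf → Prop
  | ctx {H i t H' new pre post} :
      StepT H i t H' (.inl new) →
      Step H (.ok (pre ++ (i, t) :: post)) H' (.ok (pre ++ new ++ post))
  | toErr {H i t H' e pre post} :
      StepT H i t H' (.inr e) →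
      Step H (.ok (pre ++ (i, t) :: post)) H' (.err e)
  | done {H i v pre post} :
      Step H (.ok (pre ++ (i, .val v) :: post)) H (.ok (pre ++ post))

/-! ### Well-formedness -/

/-- Well-formed environment: no duplicate bindings. -/
def EnvOk (Γ : Env) : Prop := (Γ.map Prod.fst).Nodup

/-- `OkRefEnv Γ K v`: compatibility of a stored value with the enclosing capability,
relative to a store typing. -/
def OkRefEnv (Γ : Env) (K : Cap) (v : Val) : Prop :=
  ∀ ι, v = .loc ι → ∃ K', Γ.lookup (Sum.inr ι) = some K' ∧ CapLe K K'

/-- Well-formed store `Γ ⊢ H` (WF-H-Empty, WF-H-Absent, WF-H-Var, WF-H-Chan, WF-H-Object). -/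
inductive WFStore : Env → Heap → Prop
  | nil {Γ} : EnvOk Γ → WFStore Γ []
  | absent {Γ H x} :
      (Γ.lookup (Sum.inl x)).isSome → WFStore Γ H →
      WFStore Γ ((Sum.inl x, .varc .absent) :: H)
  | varb {Γ H x ι K} :
      lookupH H (Sum.inl x) = none → (lookupH H (Sum.inr ι)).isSome →
      Γ.lookup (Sum.inl x) = some K → Γ.lookup (Sum.inr ι) = some K →
      WFStore Γ H → WFStore Γ ((Sum.inl x, .varc (.loc ι)) :: H)
  | chanb {Γ H ι k v} :
      lookupH H (Sum.inr ι) = none → v ≠ .absent →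
      Γ.lookup (Sum.inr ι) = some .lcl →
      (∀ ι', v = .loc ι' → Γ.lookup (Sum.inr ι') ≠ some .lcl) →
      WFStore Γ H → WFStore Γ ((Sum.inr ι, .chan k v) :: H)
  | objb {Γ H ι K o fs ms} :
      Γ.lookup (Sum.inr ι) = some K → lookupH H (Sum.inr ι) = none →
      (∀ p ∈ fs, p.2 ≠ .empty ∧ OkRefEnv Γ K p.2) →
      WFStore Γ H → WFStore Γ ((Sum.inr ι, .obj K o fs ms) :: H)

/-- Well-formed terms `Γ ⊢ t`. -/
inductive WFTerm : Env → Term → Prop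
  | var {Γ x} : EnvOk Γ → (Γ.lookup (Sum.inl x)).isSome → WFTerm Γ (.var x)
  | loc {Γ ι} : EnvOk Γ → (Γ.lookup (Sum.inr ι)).isSome → WFTerm Γ (.val (.loc ι))
  | absent {Γ} : EnvOk Γ → WFTerm Γ (.val .absent)
  | consume {Γ x} : WFTerm Γ (.var x) → WFTerm Γ (.consume x)
  | letIn {Γ x K e t} :
      Γ.lookup (Sum.inl x) = none → WFTerm Γ e →
      WFTerm ((Sum.inl x, K) :: Γ) t → WFTerm Γ (.letIn x e t)
  | fieldRead {Γ x f} : WFTerm Γ (.var x) → WFTerm Γ (.fieldRead x f)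
  | fieldWrite {Γ x f w} : WFTerm Γ (.var x) → WFTerm Γ w → WFTerm Γ (.fieldWrite x f w)
  | call {Γ x m w} : WFTerm Γ (.var x) → WFTerm Γ w → WFTerm Γ (.call x m w)
  | send {Γ c w} : WFTerm Γ c → WFTerm Γ w → WFTerm Γ (.send c w)
  | recv {Γ c} : WFTerm Γ c → WFTerm Γ (.recv c)
  | blocked {Γ k ι} : EnvOk Γ → (Γ.lookup (Sum.inr ι)).isSome → WFTerm Γ (.blocked k ι)
  | spawn {Γ x t} :
      Γ.lookup (Sum.inl x) = none →
      WFTerm [(Sum.inl x, Cap.lcl)] t → (∀ y ∈ freeVars t, y = x) →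
      WFTerm Γ (.spawn x t)
  | copy {Γ K x} : K ≠ .iso → WFTerm Γ (.var x) → WFTerm Γ (.copy K x)
  | cast {Γ K w} : WFTerm Γ w → WFTerm Γ (.cast K w)
  | objLit {Γ K fs ms} (Km : ℕ × ℕ × Term → Cap) :
      (∀ p ∈ fs, WFTerm Γ p.2) →
      (∀ q ∈ ms, WFTerm ((Sum.inl q.2.1, Km q) :: [(Sum.inl 0, K)]) q.2.2) →
      WFTerm Γ (.objLit K fs ms)

/-! ### Reachability and the global invariants -/

/-- The field-edge relation on heap locations. -/
def pointsTo (H : Heap) (ι ι' : ℕ) : Prop :=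
  ∃ K o fs ms f, lookupH H (Sum.inr ι) = some (.obj K o fs ms) ∧ (f, Val.loc ι') ∈ fs

/-- Reachability between locations. -/
def Reach (H : Heap) : ℕ → ℕ → Prop := Relation.ReflTransGen (pointsTo H)

/-- Roots of a term: locations held by its free variables or occurring directly in it. -/
def rootsOf (H : Heap) (t : Term) (ι : ℕ) : Prop :=
  (∃ x ∈ freeVars t, lookVar H x = some (.loc ι)) ∨ ι ∈ locsOf t

/-- `TReach H t ι`: location `ι` belongs to the reachable object graph of term `t`. -/
def TReach (H : Heap) (t : Term) (ι : ℕ) : Prop :=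
  ∃ ι0, rootsOf H t ι0 ∧ Reach H ι0 ι

/-- Thread-locality invariant: no local object is reachable from two threads
(except via its unique owner). -/
def LocalInv (H : Heap) (ts : ThreadL) : Prop :=
  ∀ p ∈ ts, ∀ q ∈ ts, ∀ ι, TReach H p.2 ι → TReach H q.2 ι →
    p = q ∨ ¬ isLocal H (.loc ι) ∨
      (p ≠ q ∧ p.1 ≠ q.1 ∧
        (isLocal H (.loc ι) → isOwner H p.1 (.loc ι) ∧ ¬ isOwner H q.1 (.loc ι)))

/-- Heap incoming references to `ι`: fields and channels holding `loc ι`. -/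
def HRefs (H : Heap) (ι : ℕ) : Set Name :=
  {n | (∃ K o fs ms f, lookupH H n = some (.obj K o fs ms) ∧ (f, Val.loc ι) ∈ fs) ∨
       (∃ k, lookupH H n = some (.chan k (.loc ι)))}

/-- Stack incoming references to `ι` from a term: free variables bound to `ι`
(`some x`) or a direct occurrence of `ι` (`none`). -/
def SRefs (H : Heap) (t : Term) (ι : ℕ) : Set (Option ℕ) :=
  {r | (∃ x, r = some x ∧ x ∈ freeVars t ∧ lookVar H x = some (.loc ι)) ∨
       (r = none ∧ ι ∈ locsOf t)}

/-- All incoming references to `ι`: heap references (inl) and per-thread stack references (inr). -/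
def AllRefs (H : Heap) (ts : ThreadL) (ι : ℕ) : Set (Name ⊕ (ℕ × Option ℕ)) :=
  {r | (∃ n ∈ HRefs H ι, r = Sum.inl n) ∨
       (∃ k t s, (k, t) ∈ ts ∧ s ∈ SRefs H t ι ∧ r = Sum.inr (k, s))}

/-- Isolation invariant: if an iso object has more than one incoming reference,
all of them are stack references of a single thread (borrowing) and there are
no heap references. -/
def IsolatedInv (H : Heap) (ts : ThreadL) : Prop :=
  ∀ ι, isIso H (.loc ι) → ¬ (AllRefs H ts ι).Subsingleton →
    ∃ p ∈ ts, (∀ r ∈ AllRefs H ts ι, ∃ s, r = Sum.inr (p.1, s)) ∧ HRefs H ι = ∅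

/-- `domEq Γ H`: the environment and heap have the same domain. -/
def domEq (Γ : Env) (H : Heap) : Prop :=
  ∀ n, (Γ.lookup n).isSome ↔ (lookupH H n).isSome

/-- Well-formed configuration `Γ ⊢ H; T̄` (WF-Configuration). -/
def WFConfig (Γ : Env) (H : Heap) (ts : ThreadL) : Prop :=
  domEq Γ H ∧ WFStore Γ H ∧ (∀ p ∈ ts, WFTerm Γ p.2) ∧
    LocalInv H ts ∧ IsolatedInv H ts

/-! ### Terminal configurations -/

/-- Deadlocked configuration: every thread is blocked on a send, receive or blocked marker. -/
def Deadlock (H : Heap) (ts : ThreadL) : Prop :=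
  ts ≠ [] ∧ ∀ p ∈ ts,
    (∃ E ι k, p.2 = plug E (.recv (.val (.loc ι))) ∧
        lookupH H (Sum.inr ι) = some (.chan k .empty)) ∨
    (∃ E ι w k v, p.2 = plug E (.send (.val (.loc ι)) (.val w)) ∧
        lookupH H (Sum.inr ι) = some (.chan k v) ∧ v ≠ .empty) ∨
    (∃ E k ι v, p.2 = plug E (.blocked k ι) ∧
        lookupH H (Sum.inr ι) = some (.chan k v))

/-- Terminal configurations: no threads, an error, or a deadlock. -/
def Terminal (H : Heap) (c : Conf) : Prop :=
  match c with
  | .err _ => True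
  | .ok ts => ts = [] ∨ Deadlock H ts

/-! ### Safe-capability erasure -/

/-- Capability erasure: every capability becomes unsafe. -/
def eraseCap (_ : Cap) : Cap := .unsf

-- Erasure of terms.
mutual
  def eraseT : Term → Term
    | .var x => .var x
    | .consume x => .consume x
    | .val v => .val v
    | .letIn x e t => .letIn x (eraseT e) (eraseT t)
    | .fieldRead x f => .fieldRead x f
    | .fieldWrite x f w => .fieldWrite x f (eraseT w)
    | .call x m w => .call x m (eraseT w)
    | .send c w => .send (eraseT c) (eraseT w)
    | .recv c => .recv (eraseT c)
    | .spawn x t => .spawn x (eraseT t)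
    | .blocked k ι => .blocked k ι
    | .objLit _ fs ms => .objLit .unsf (eraseTF fs) (eraseTM ms)
    | .cast _ w => .cast .unsf (eraseT w)
    | .copy _ x => .copy .unsf x
  def eraseTF : List (ℕ × Term) → List (ℕ × Term)
    | [] => []
    | p :: r => (p.1, eraseT p.2) :: eraseTF r
  def eraseTM : List (ℕ × ℕ × Term) → List (ℕ × ℕ × Term)
    | [] => []
    | q :: r => (q.1, q.2.1, eraseT q.2.2) :: eraseTM r
end

def eraseCell : Cell → Cell
  | .obj _ o fs ms => .obj .unsf o fs (eraseTM ms)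
  | .chan k v => .chan k v
  | .varc v => .varc v

def eraseH (H : Heap) : Heap := H.map fun p => (p.1, eraseCell p.2)

def eraseEnv (Γ : Env) : Env := Γ.map fun p => (p.1, Cap.unsf)

def eraseTs (ts : ThreadL) : ThreadL := ts.map fun p => (p.1, eraseT p.2)

def eraseConf : Conf → Conf
  | .ok ts => .ok (eraseTs ts)
  | .err e => .err e

/-! ### Subterms -/

inductive Subterm : Term → Term → Prop
  | refl (t) : Subterm t t
  | letE {s e t x} : Subterm s e → Subterm s (.letIn x e t)
  | letT {s e t x} : Subterm s t → Subterm s (.letIn x e t)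
  | fieldWriteW {s x f w} : Subterm s w → Subterm s (.fieldWrite x f w)
  | callW {s x m w} : Subterm s w → Subterm s (.call x m w)
  | sendC {s c w} : Subterm s c → Subterm s (.send c w)
  | sendW {s c w} : Subterm s w → Subterm s (.send c w)
  | recvC {s c} : Subterm s c → Subterm s (.recv c)
  | spawnT {s x t} : Subterm s t → Subterm s (.spawn x t)
  | objF {s K fs ms f w} : (f, w) ∈ fs → Subterm s w → Subterm s (.objLit K fs ms)
  | objM {s K fs ms m y b} : (m, y, b) ∈ ms → Subterm s b → Subterm s (.objLit K fs ms)
  | castW {s K w} : Subterm s w → Subterm s (.cast K w)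


/-! ### Auxiliary lemmas for the gradual guarantee -/

theorem lookup_map_snd {α β γ : Type} [BEq α] (f : β → γ) (l : List (α × β)) (n : α) :
    (l.map fun p => (p.1, f p.2)).lookup n = (l.lookup n).map f := by
  induction l with
  | nil => rfl
  | cons p r ih =>
    simp only [List.map_cons, List.lookup]
    cases n == p.1 <;> simp [ih]

theorem lookupH_erase (H : Heap) (n : Name) :
    lookupH (eraseH H) n = (lookupH H n).map eraseCell := by
  simp [lookupH, eraseH, lookup_map_snd]

theorem lookVar_erase (H : Heap) (x : ℕ) : lookVar (eraseH H) x = lookVar H x := by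
  simp only [lookVar, lookupH_erase]
  cases h : lookupH H (Sum.inl x) with
  | none => rfl
  | some c => cases c <;> rfl

theorem freshN_erase (H : Heap) : freshN (eraseH H) = freshN H := by
  simp only [freshN, eraseH, List.map_map]
  rfl

theorem capLe_unsf : ∀ c, CapLe .unsf c := by
  intro c
  have h1 : CapLe Cap.unsf .lcl := Relation.ReflTransGen.single CapGen.ul
  have h2 : CapLe Cap.unsf .iso := h1.tail CapGen.li
  have h3 : CapLe Cap.unsf .imm := h2.tail CapGen.ii
  cases c <;> first | exact h3 | exact h2 | exact h1 | exact Relation.ReflTransGen.refl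

theorem capOf_erase_cases (H : Heap) (v : Val) (c : Cap)
    (h : capOf (eraseH H) v = some c) : c = .unsf ∨ c = .lcl := by
  cases v with
  | loc ι =>
    simp only [capOf, lookupH_erase] at h
    cases hl : lookupH H (Sum.inr ι) with
    | none => rw [hl] at h; simp at h
    | some cell =>
      rw [hl] at h
      cases cell <;> simp [eraseCell] at h <;> simp [h]
  | absent => simp [capOf] at h
  | empty => simp [capOf] at h

theorem not_isIso_erase (H : Heap) (v : Val) : ¬ isIso (eraseH H) v := by
  intro h
  rcases capOf_erase_cases H v _ h with h' | h' <;> simp at h'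

theorem not_isImm_erase (H : Heap) (v : Val) : ¬ isImm (eraseH H) v := by
  intro h
  rcases capOf_erase_cases H v _ h with h' | h' <;> simp at h'

theorem capOf_erase_obj {H : Heap} {ι K o fs ms}
    (h : lookupH H (Sum.inr ι) = some (.obj K o fs ms)) :
    capOf (eraseH H) (.loc ι) = some .unsf := by
  simp [capOf, lookupH_erase, h, eraseCell]

theorem localOwner_erase_obj {H : Heap} {i ι K o fs ms}
    (h : lookupH H (Sum.inr ι) = some (.obj K o fs ms)) :
    localOwner (eraseH H) i (.loc ι) := by
  intro hl
  rw [isLocal, capOf_erase_obj h] at hl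
  simp at hl

theorem okRef_erase {H : Heap} {K v} (h : OkRef H K v) : OkRef (eraseH H) .unsf v := by
  intro ι hv
  obtain ⟨K', hK', -⟩ := h ι hv
  subst hv
  simp only [capOf, lookupH_erase]
  simp only [capOf] at hK'
  cases hl : lookupH H (Sum.inr ι) with
  | none => rw [hl] at hK'; simp at hK'
  | some cell =>
    rw [hl] at hK'
    cases cell with
    | obj => exact ⟨.unsf, by simp [eraseCell], capLe_unsf _⟩
    | chan => exact ⟨.lcl, by simp [eraseCell], capLe_unsf _⟩
    | varc => simp at hK'

theorem lookup_eraseTM (ms : List (ℕ × ℕ × Term)) (m : ℕ) :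
    (eraseTM ms).lookup m = (ms.lookup m).map fun q => (q.1, eraseT q.2) := by
  induction ms with
  | nil => rfl
  | cons q r ih =>
    simp only [eraseTM, List.lookup]
    cases m == q.1 <;> simp [ih]

/-- Erasure of evaluation contexts. -/
def eraseE : Ctx → Ctx
  | .hole => .hole
  | .letc x C t => .letc x (eraseE C) (eraseT t)

theorem eraseT_plug (E : Ctx) (t : Term) :
    eraseT (plug E t) = plug (eraseE E) (eraseT t) := by
  induction E with
  | hole => rfl
  | letc x C u ih => simp [plug, eraseE, eraseT, ih]

theorem eraseTF_vals (fs : List (ℕ × Val)) :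
    eraseTF (fs.map fun p => (p.1, Term.val p.2)) = fs.map fun p => (p.1, Term.val p.2) := by
  induction fs with
  | nil => rfl
  | cons p r ih => simp [eraseTF, eraseT, ih]

mutual
theorem eraseT_subst (a b : ℕ) : ∀ t, eraseT (subst a b t) = subst a b (eraseT t)
  | .var x => rfl
  | .consume x => rfl
  | .val v => rfl
  | .letIn x e t => by
      by_cases h : x = a <;>
        simp [subst, eraseT, h, eraseT_subst a b e, eraseT_subst a b t]
  | .fieldRead x f => rfl
  | .fieldWrite x f w => by simp [subst, eraseT, eraseT_subst a b w]
  | .call x m w => by simp [subst, eraseT, eraseT_subst a b w]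
  | .send c w => by simp [subst, eraseT, eraseT_subst a b c, eraseT_subst a b w]
  | .recv c => by simp [subst, eraseT, eraseT_subst a b c]
  | .spawn x t => by
      by_cases h : x = a <;> simp [subst, eraseT, h, eraseT_subst a b t]
  | .blocked k ι => rfl
  | .objLit K fs ms => by simp [subst, eraseT, eraseTF_subst a b fs]
  | .cast K w => by simp [subst, eraseT, eraseT_subst a b w]
  | .copy K x => rfl
theorem eraseTF_subst (a b : ℕ) :
    ∀ fs, eraseTF (substF a b fs) = substF a b (eraseTF fs)
  | [] => rfl
  | p :: r => by simp [substF, eraseTF, eraseT_subst a b p.2, eraseTF_subst a b r]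
end

theorem eraseH_cons (p : Name × Cell) (H : Heap) :
    eraseH (p :: H) = (p.1, eraseCell p.2) :: eraseH H := rfl

theorem lookupH_erase_obj {H : Heap} {ι K o fs ms}
    (h : lookupH H (Sum.inr ι) = some (.obj K o fs ms)) :
    lookupH (eraseH H) (Sum.inr ι) = some (.obj .unsf o fs (eraseTM ms)) := by
  rw [lookupH_erase, h]; rfl

theorem lookupH_erase_chan {H : Heap} {ι k v}
    (h : lookupH H (Sum.inr ι) = some (.chan k v)) :
    lookupH (eraseH H) (Sum.inr ι) = some (.chan k v) := by
  rw [lookupH_erase, h]; rfl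

theorem lookupH_erase_none {H : Heap} {n}
    (h : lookupH H n = none) : lookupH (eraseH H) n = none := by
  rw [lookupH_erase, h]; rfl

theorem lookVar_erase' {H : Heap} {x r} (h : lookVar H x = r) :
    lookVar (eraseH H) x = r := by rw [lookVar_erase]; exact h


/-- Dynamic gradual guarantee (non-error direction): if the annotated
configuration takes a non-error step, the erased configuration takes the
erased step. -/
theorem dynamic_gradual_guarantee_non_error
    (Γ : Env) (H H' : Heap) (i : ℕ) (t : Term) (ts0 : ThreadL)
    (new : ThreadL)
    (hwf : WFConfig Γ H ((i, t) :: ts0))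
    (hstep : StepT H i t H' (.inl new)) :
    StepT (eraseH H) i (eraseT t) (eraseH H') (.inl (eraseTs new)) := by
  clear hwf
  cases hstep with
  | rLet hx =>
    simp only [eraseT, eraseTs, List.map_cons, List.map_nil, eraseH_cons, eraseCell]
    exact StepT.rLet (lookupH_erase_none hx)
  | rVar h1 h2 =>
    simp only [eraseT_plug, eraseT, eraseTs, List.map_cons, List.map_nil]
    exact StepT.rVar (lookVar_erase' h1) (not_isIso_erase _ _)
  | rConsume h1 =>
    simp only [eraseT_plug, eraseT, eraseTs, List.map_cons, List.map_nil,
      eraseH_cons, eraseCell]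
    exact StepT.rConsume (lookVar_erase' h1)
  | rField h1 h2 h3 h4 h5 =>
    simp only [eraseT_plug, eraseT, eraseTs, List.map_cons, List.map_nil]
    exact StepT.rField (lookVar_erase' h1) (lookupH_erase_obj h2) h3
      (not_isIso_erase _ _) (localOwner_erase_obj h2)
  | rFieldAssign h1 h2 h3 h4 h5 h6 =>
    simp only [eraseT_plug, eraseT, eraseTs, List.map_cons, List.map_nil,
      eraseH_cons, eraseCell]
    exact StepT.rFieldAssign (lookVar_erase' h1) (lookupH_erase_obj h2) h3
      (not_isImm_erase _ _) (okRef_erase h5)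
      (fun hl => absurd hl (by rw [isLocal, capOf_erase_obj h2]; simp))
  | rNew h1 h2 =>
    simp only [eraseT_plug, eraseT, eraseTs, List.map_cons, List.map_nil,
      eraseH_cons, eraseCell, eraseTF_vals]
    exact StepT.rNew
      (fun p hp => ⟨okRef_erase (h1 p hp).1, fun h => by simp at h⟩)
      (by rw [freshN_erase]; exact h2)
  | rCall h1 h2 h3 h4 h5 =>
    simp only [eraseT_plug, eraseT, eraseTs, List.map_cons, List.map_nil,
      eraseH_cons, eraseCell, eraseT_subst]
    exact StepT.rCall (lookVar_erase' h1) (lookupH_erase_obj h2)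
      (by rw [lookup_eraseTM, h3]; rfl)
      (by rw [freshN_erase]; exact h4) (by rw [freshN_erase]; exact h5)
  | rCastLoc h1 =>
    simp only [eraseT_plug, eraseT, eraseTs, List.map_cons, List.map_nil]
    exact StepT.rCastLoc (lookupH_erase_obj h1)
  | rSpawn h1 h2 =>
    simp only [eraseT_plug, eraseT, eraseTs, List.map_cons, List.map_nil,
      eraseH_cons, eraseCell]
    exact StepT.rSpawn (lookupH_erase_none h1) (by rw [freshN_erase]; exact h2)
  | rRecv h1 =>
    simp only [eraseT_plug, eraseT, eraseTs, List.map_cons, List.map_nil,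
      eraseH_cons, eraseCell]
    exact StepT.rRecv (lookupH_erase_chan h1)
  | rSendBlock h1 h2 =>
    simp only [eraseT_plug, eraseT, eraseTs, List.map_cons, List.map_nil,
      eraseH_cons, eraseCell]
    exact StepT.rSendBlock (lookupH_erase_chan h1) (by rw [freshN_erase]; exact h2)
  | rSendUnblock h1 h2 =>
    simp only [eraseT_plug, eraseT, eraseTs, List.map_cons, List.map_nil]
    exact StepT.rSendUnblock (lookupH_erase_chan h1) h2
  | rCopy h1 h2 h3 h4 h5 =>
    simp only [eraseT_plug, eraseT, eraseTs, List.map_cons, List.map_nil,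
      eraseH_cons, eraseCell]
    exact StepT.rCopy (by simp) (lookVar_erase' h2) (localOwner_erase_obj h4)
      (lookupH_erase_obj h4) (by rw [freshN_erase]; exact h5)

end Dala
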